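/- arXiv:1508.03275 — 3 statements merged into one kernel-verified Lean document; each statement's English description precedes it below -/
import Mathlib

section
/- A nonzero atomless Banach lattice E with order continuous norm cannot admit a residually quasi-monotone FDD: there is no sequence (Pₙ)_{n∈ℕ} of continuous finite-rank linear projections on E with Pₙ ∘ Pₘ = P_{min(n,m)} for all n, m and Pₙ x → x in norm for every x ∈ E, for which there exists a constant M > 0 such that for all x, y ∈ E with |x| ≤ |y| and all n, ‖x − Pₙ x‖ ≤ M ‖y − Pₙ y‖. -/
open Filter Set

/-- A directed preorder-like index set for nets, given by a relation `r`. -/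
def IsNetIndex (ι : Type*) (r : ι → ι → Prop) : Prop :=
  Nonempty ι ∧ Reflexive r ∧ Transitive r ∧ ∀ a b, ∃ c, r a c ∧ r b c

/-- An element `e > 0` of a lattice-ordered group is an atom if any two disjoint
elements of `[0, e]` cannot both be nonzero. -/
def IsLatticeAtom {E : Type*} [Lattice E] [AddCommGroup E] (e : E) : Prop :=
  0 < e ∧ ∀ f₁ f₂ : E, 0 ≤ f₁ → f₁ ≤ e → 0 ≤ f₂ → f₂ ≤ e → f₁ ⊓ f₂ = 0 → f₁ = 0 ∨ f₂ = 0

/-- A normed lattice has order continuous norm if every decreasing net with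
infimum `0` converges to `0` in norm. -/
def OrderContinuousNorm (E : Type*) [NormedAddCommGroup E] [Lattice E] [HasSolidNorm E]
    [IsOrderedAddMonoid E] : Prop :=
  ∀ (ι : Type) (r : ι → ι → Prop), IsNetIndex ι r →
    ∀ e : ι → E, (∀ a b : ι, r a b → e b ≤ e a) → IsGLB (Set.range e) 0 →
      ∀ ε : ℝ, 0 < ε → ∃ α₀ : ι, ∀ α : ι, r α₀ α → ‖e α‖ < ε

/-!
Residual quasi-monotonicity forces `Pₙ x = x` whenever `|x| ≤ |Pₙ y|`, since then
`‖x - Pₙ x‖ ≤ M ‖Pₙ y - Pₙ (Pₙ y)‖ = 0`. Pick `y` with `Pₙ y ≠ 0`. Splitting `|Pₙ y|` again and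
again (no atoms) gives infinitely many pairwise disjoint nonzero elements of `[0, |Pₙ y|]`, all in
the finite-dimensional range of `Pₙ`. But disjoint positive vectors are linearly independent, as
soon as positive reals preserve positivity; in a normed lattice they do, because the positive cone
is closed and `n • y ≥ 0` forces `y ≥ 0` in a lattice-ordered group.
-/

section LatticeOrderedGroup

variable {α : Type*} [Lattice α] [AddCommGroup α] [IsOrderedAddMonoid α] {a b c : α}

theorem inf_add_eq_zero (ha : 0 ≤ a) (hb : 0 ≤ b) (hc : 0 ≤ c) (hab : a ⊓ b = 0)
    (hac : a ⊓ c = 0) : a ⊓ (b + c) = 0 := by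
  refine le_antisymm ?_ (le_inf ha (add_nonneg hb hc))
  calc a ⊓ (b + c) ≤ a ⊓ ((a + c) ⊓ (b + c)) :=
        le_inf inf_le_left (inf_le_inf_right _ (le_add_of_nonneg_right hc))
    _ = a ⊓ c := by rw [← inf_add, hab, zero_add]
    _ = 0 := hac

theorem inf_nsmul_eq_zero (ha : 0 ≤ a) (hb : 0 ≤ b) (hab : a ⊓ b = 0) (n : ℕ) :
    a ⊓ n • b = 0 := by
  induction n with
  | zero => simpa using ha
  | succ n ih => rw [succ_nsmul]; exact inf_add_eq_zero ha (nsmul_nonneg hb n) hb ih hab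

theorem inf_sum_eq_zero {ι : Type*} (s : Finset ι) {f : ι → α} (ha : 0 ≤ a)
    (hf : ∀ i ∈ s, 0 ≤ f i ∧ a ⊓ f i = 0) : a ⊓ ∑ i ∈ s, f i = 0 :=
  (Finset.sum_induction f (fun x => 0 ≤ x ∧ a ⊓ x = 0)
    (fun _ _ hx hy => ⟨add_nonneg hx.1 hy.1, inf_add_eq_zero ha hx.1 hy.1 hx.2 hy.2⟩)
    ⟨le_rfl, inf_eq_right.2 ha⟩ hf).2

theorem nonneg_of_nsmul_nonneg {n : ℕ} (hn : n ≠ 0) {y : α} (h : 0 ≤ n • y) : 0 ≤ y := by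
  have hle : y⁻ ≤ n • y⁺ := calc
    y⁻ ≤ n • y⁻ := le_self_nsmul (negPart_nonneg y) hn
    _ ≤ n • y⁺ := by rwa [← sub_nonneg, ← nsmul_sub, posPart_sub_negPart]
  have hdisj : y⁻ ⊓ n • y⁺ = 0 := inf_nsmul_eq_zero (negPart_nonneg y) (posPart_nonneg y)
    (inf_comm y⁺ y⁻ ▸ posPart_inf_negPart_eq_zero y) n
  rw [inf_eq_left.2 hle] at hdisj
  exact negPart_eq_zero.1 hdisj

theorem ratCast_smul_nonneg {K : Type*} [DivisionRing K] [CharZero K] [Module K α] {q : ℚ}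
    (hq : 0 ≤ q) {x : α} (hx : 0 ≤ x) : 0 ≤ (q : K) • x := by
  refine nonneg_of_nsmul_nonneg q.den_nz ?_
  have hnum : ((q.num.toNat : ℕ) : K) = q.den * q := by
    have h : ((q.num.toNat : ℕ) : ℚ) = q.den * q := by
      rw [Rat.den_mul_eq_num, ← Int.cast_natCast, Int.toNat_of_nonneg (Rat.num_nonneg.2 hq)]
    exact_mod_cast h
  rw [← Nat.cast_smul_eq_nsmul K, smul_smul, ← hnum, Nat.cast_smul_eq_nsmul]
  exact nsmul_nonneg hx _

end LatticeOrderedGroup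

section NormedLattice

variable {E : Type*} [NormedAddCommGroup E] [Lattice E] [HasSolidNorm E] [IsOrderedAddMonoid E]
  [NormedSpace ℝ E]

theorem HasSolidNorm.isOrderedModule_real : IsOrderedModule ℝ E :=
  .of_smul_nonneg fun c hc x hx => by
    have key : 0 ≤ max c 0 • x :=
      Rat.denseRange_cast.induction_on (p := fun c : ℝ => 0 ≤ max c 0 • x) c
        (isClosed_nonneg.preimage (by fun_prop)) fun q => by
          simpa only [← Rat.cast_zero (α := ℝ), ← Rat.cast_max] using
            ratCast_smul_nonneg (le_max_right q 0) hx
    rwa [max_eq_left hc] at key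

end NormedLattice

section VectorLattice

variable {𝕜 α : Type*} [Field 𝕜] [LinearOrder 𝕜] [IsStrictOrderedRing 𝕜] [Archimedean 𝕜]
  [Lattice α] [AddCommGroup α] [IsOrderedAddMonoid α] [Module 𝕜 α] [IsOrderedModule 𝕜 α]

theorem inf_smul_eq_zero {a b : α} (ha : 0 ≤ a) (hb : 0 ≤ b) (hab : a ⊓ b = 0) {c : 𝕜}
    (hc : 0 ≤ c) : a ⊓ c • b = 0 := by
  obtain ⟨n, hn⟩ := exists_nat_ge c
  refine le_antisymm ?_ (le_inf ha (smul_nonneg hc hb))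
  calc a ⊓ c • b ≤ a ⊓ n • b := by
        rw [← Nat.cast_smul_eq_nsmul 𝕜]
        exact inf_le_inf_left a (smul_le_smul_of_nonneg_right hn hb)
    _ = 0 := inf_nsmul_eq_zero ha hb hab n

theorem smul_inf_smul_eq_zero {a b : α} (ha : 0 ≤ a) (hb : 0 ≤ b) (hab : a ⊓ b = 0) {c d : 𝕜}
    (hc : 0 ≤ c) (hd : 0 ≤ d) : c • a ⊓ d • b = 0 := by
  refine inf_smul_eq_zero (smul_nonneg hc ha) hb ?_ hd
  rw [inf_comm] at hab ⊢
  exact inf_smul_eq_zero hb ha hab hc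

theorem linearIndependent_of_pairwise_inf_eq_zero {ι : Type*} {g : ι → α} (hg : ∀ i, 0 < g i)
    (hdisj : Pairwise fun i j => g i ⊓ g j = 0) : LinearIndependent 𝕜 g := by
  classical
  rw [linearIndependent_iff']
  intro s c hsum j hj
  set h := ∑ i ∈ s.erase j, |c i| • g i
  have hcj : c j • g j = -∑ i ∈ s.erase j, c i • g i := by
    rw [eq_neg_iff_add_eq_zero, Finset.add_sum_erase s (fun i => c i • g i) hj, hsum]
  -- `|c j| • g j` is dominated by `h` and disjoint from it.
  have hle : |c j| • g j ≤ h := by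
    rcases abs_choice (c j) with hc | hc
    · rw [hc, hcj, ← Finset.sum_neg_distrib]
      exact Finset.sum_le_sum fun i _ => by
        rw [← neg_smul]; exact smul_le_smul_of_nonneg_right (neg_le_abs _) (hg i).le
    · rw [hc, neg_smul, hcj, neg_neg]
      exact Finset.sum_le_sum fun i _ => smul_le_smul_of_nonneg_right (le_abs_self _) (hg i).le
  have hdisj_h : |c j| • g j ⊓ h = 0 :=
    inf_sum_eq_zero _ (smul_nonneg (abs_nonneg _) (hg j).le) fun i hi =>
      ⟨smul_nonneg (abs_nonneg _) (hg i).le, smul_inf_smul_eq_zero (hg j).le (hg i).le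
        (hdisj (Finset.ne_of_mem_erase hi).symm) (abs_nonneg _) (abs_nonneg _)⟩
  rw [inf_eq_left.2 hle, smul_eq_zero, abs_eq_zero] at hdisj_h
  exact hdisj_h.resolve_right (hg j).ne'

end VectorLattice

section Atomless

variable {α : Type*} [Lattice α] [AddCommGroup α]

theorem exists_disjoint_of_not_isLatticeAtom {e : α} (he : 0 < e) (h : ¬IsLatticeAtom e) :
    ∃ f₁ f₂ : α, 0 < f₁ ∧ f₁ ≤ e ∧ 0 < f₂ ∧ f₂ ≤ e ∧ f₁ ⊓ f₂ = 0 := by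
  simp only [IsLatticeAtom, he, true_and, not_forall, not_or] at h
  obtain ⟨f₁, f₂, h₁, h₁e, h₂, h₂e, hdisj, hne₁, hne₂⟩ := h
  exact ⟨f₁, f₂, h₁.lt_of_ne' hne₁, h₁e, h₂.lt_of_ne' hne₂, h₂e, hdisj⟩

/-- Split `e`, keep the first piece and split the second one again, and so on. -/
theorem exists_pairwise_disjoint_seq_of_atomless (hatomless : ∀ e : α, ¬IsLatticeAtom e)
    {e : α} (he : 0 < e) :
    ∃ g : ℕ → α, (∀ k, 0 < g k ∧ g k ≤ e) ∧ Pairwise fun i j => g i ⊓ g j = 0 := by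
  choose! F₁ F₂ hF₁ hF₁e hF₂ hF₂e hF using
    fun e (he : 0 < e) => exists_disjoint_of_not_isLatticeAtom he (hatomless e)
  set r : ℕ → α := fun k => F₂^[k] e
  have hr_succ (k : ℕ) : r (k + 1) = F₂ (r k) := Function.iterate_succ_apply' F₂ k e
  have hr_pos (k : ℕ) : 0 < r k := by
    induction k with
    | zero => exact he
    | succ k ih => rw [hr_succ]; exact hF₂ _ ih
  have hr_anti : Antitone r :=
    antitone_nat_of_succ_le fun k => (hr_succ k).trans_le (hF₂e _ (hr_pos k))
  have hlt {i j : ℕ} (hij : i < j) : F₁ (r i) ⊓ F₁ (r j) = 0 := by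
    refine le_antisymm ?_ (le_inf (hF₁ _ (hr_pos i)).le (hF₁ _ (hr_pos j)).le)
    calc F₁ (r i) ⊓ F₁ (r j) ≤ F₁ (r i) ⊓ F₂ (r i) :=
          inf_le_inf_left _ ((hF₁e _ (hr_pos j)).trans ((hr_anti hij).trans_eq (hr_succ i)))
      _ = 0 := hF _ (hr_pos i)
  refine ⟨fun k => F₁ (r k), fun k => ⟨hF₁ _ (hr_pos k), ?_⟩, fun i j hij => ?_⟩
  · exact (hF₁e _ (hr_pos k)).trans (hr_anti k.zero_le)
  · rcases hij.lt_or_gt with h | h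
    · exact hlt h
    · exact inf_comm (F₁ (r i)) _ ▸ hlt h

end Atomless

theorem apply_eq_self_of_abs_le_abs_apply {E : Type*} [NormedAddCommGroup E] [Lattice E]
    {P : E → E} {M : ℝ} (hP : ∀ y, P (P y) = P y)
    (hres : ∀ x y, |x| ≤ |y| → ‖x - P x‖ ≤ M * ‖y - P y‖) {x y : E} (h : |x| ≤ |P y|) :
    P x = x := by
  have := hres x (P y) h
  rw [hP, sub_self, norm_zero, mul_zero, norm_le_zero_iff, sub_eq_zero] at this
  exact this.symm

theorem no_residuallyQuasiMonotoneFDD_general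
    {E : Type*} [NormedAddCommGroup E] [Lattice E] [HasSolidNorm E] [IsOrderedAddMonoid E]
    [NormedSpace ℝ E]
    [Nontrivial E]
    (hatomless : ∀ e : E, ¬ IsLatticeAtom e) :
    ¬ ∃ (P : ℕ → E →L[ℝ] E) (M : ℝ), 0 < M ∧
        (∀ n m : ℕ, (P n).comp (P m) = P (min n m)) ∧
        (∀ n : ℕ, FiniteDimensional ℝ (LinearMap.range ((P n : E →ₗ[ℝ] E)))) ∧
        (∀ x : E, Tendsto (fun n => P n x) atTop (nhds x)) ∧
        (∀ (x y : E) (n : ℕ), |x| ≤ |y| → ‖x - P n x‖ ≤ M * ‖y - P n y‖) := by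
  rintro ⟨P, M, -, hcomp, hfin, hconv, hres⟩
  obtain ⟨x, hx⟩ := exists_ne (0 : E)
  obtain ⟨n, hn⟩ := ((hconv x).eventually_ne hx).exists
  have he : 0 < |P n x| := (abs_nonneg _).lt_of_ne' fun h =>
    hn (norm_eq_zero.1 (by rw [← norm_abs_eq_norm, h, norm_zero]))
  obtain ⟨g, hg, hdisj⟩ := exists_pairwise_disjoint_seq_of_atomless hatomless he
  have hproj (y : E) : P n (P n y) = P n y := by simpa using congr($(hcomp n n) y)
  set V := LinearMap.range (P n : E →ₗ[ℝ] E)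
  have hgV (k : ℕ) : g k ∈ V :=
    ⟨g k, apply_eq_self_of_abs_le_abs_apply hproj (hres · · n) (y := x)
      ((abs_of_pos (hg k).1).trans_le (hg k).2)⟩
  have := HasSolidNorm.isOrderedModule_real (E := E)
  have hli : LinearIndependent ℝ g :=
    linearIndependent_of_pairwise_inf_eq_zero (fun k => (hg k).1) hdisj
  exact Module.Finite.not_linearIndependent_of_infinite (fun k => (⟨g k, hgV k⟩ : V))
    (.of_comp V.subtype hli)

/-- A nonzero atomless Banach lattice with order continuous norm admits no
residually quasi-monotone FDD: there is no sequence of continuous finite-rank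
projections `P n` with `P n ∘ P m = P (min n m)`, converging pointwise to the
identity, whose residual projections `Id - P n` are uniformly quasi-monotone. -/
theorem no_residuallyQuasiMonotoneFDD
    {E : Type*} [NormedAddCommGroup E] [Lattice E] [HasSolidNorm E] [IsOrderedAddMonoid E]
    [NormedSpace ℝ E] [CompleteSpace E]
    [Nontrivial E]
    (hatomless : ∀ e : E, ¬ IsLatticeAtom e)
    (hoc : OrderContinuousNorm E) :
    ¬ ∃ (P : ℕ → E →L[ℝ] E) (M : ℝ), 0 < M ∧
        (∀ n m : ℕ, (P n).comp (P m) = P (min n m)) ∧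
        (∀ n : ℕ, FiniteDimensional ℝ (LinearMap.range ((P n : E →ₗ[ℝ] E)))) ∧
        (∀ x : E, Tendsto (fun n => P n x) atTop (nhds x)) ∧
        (∀ (x y : E) (n : ℕ), |x| ≤ |y| → ‖x - P n x‖ ≤ M * ‖y - P n y‖) :=
  no_residuallyQuasiMonotoneFDD_general hatomless
end

section
/- Let (Ω, Σ, μ) be a σ-finite atomless measure space, X a Banach space, 1 ≤ p < ∞ and F a finite dimensional normed space. Then every norm-continuous linear operator T : Lp(μ, X) → F is narrow: for every f ∈ Lp(μ, X) and every ε > 0 there exists a measurable set A ∈ Σ such that ‖T(1_A f) − T(1_{Ω∖A} f)‖ < ε. -/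
open MeasureTheory Filter Set
open scoped ENNReal

/-- A measure is atomless if every measurable set of positive measure has a
measurable subset of strictly smaller positive measure. -/
def MeasureAtomless {Ω : Type*} [MeasurableSpace Ω] (μ : Measure Ω) : Prop :=
  ∀ A : Set Ω, MeasurableSet A → 0 < μ A →
    ∃ B : Set Ω, B ⊆ A ∧ MeasurableSet B ∧ 0 < μ B ∧ μ B < μ A

/-- The restriction `1_A • f` of `f ∈ Lp(μ, X)` to a measurable set `A`. -/
noncomputable def restrictLp {Ω X : Type*} [MeasurableSpace Ω] {μ : Measure Ω}
    {p : ℝ≥0∞} [NormedAddCommGroup X] (f : Lp X p μ) {A : Set Ω}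
    (hA : MeasurableSet A) : Lp X p μ :=
  ((Lp.memLp f).indicator hA).toLp (A.indicator f)

/-- The scalar function `t ↦ ‖f t‖` as an element of `Lp(μ, ℝ)`. -/
noncomputable def normLp {Ω X : Type*} [MeasurableSpace Ω] {μ : Measure Ω}
    {p : ℝ≥0∞} [NormedAddCommGroup X] (f : Lp X p μ) : Lp ℝ p μ :=
  ((Lp.memLp f).norm).toLp (fun t => ‖f t‖)

/-! Cut `f` into finitely many pieces `1_{P i} f` of small norm `η`: outside a set of finite
measure `f` is small, on that set atomlessness yields a finite partition into sets of small
measure (by greedy exhaustion), and sets of small measure carry little of `f` by uniform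
integrability. It remains to choose signs balancing the vectors `v i = T (1_{P i} f)` of `F`:
an extreme point `l` of `{l ∈ [-1, 1]ᴺ | ∑ l i • v i = 0}` has at most `dim F` coordinates in
`(-1, 1)`, because the corresponding `v i` are linearly independent, so rounding `l` to signs
moves the sum by at most `2 · dim F · ‖T‖ · η`. -/

open Function Metric Module Topology

section Balancing

variable {ι F : Type*} [Fintype ι] [NormedAddCommGroup F] [NormedSpace ℝ F]

def balancingCoeffs (v : ι → F) : Set (ι → ℝ) :=
  closedBall 0 1 ∩ LinearMap.ker (Fintype.linearCombination ℝ v)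

theorem mem_balancingCoeffs {v : ι → F} {l : ι → ℝ} :
    l ∈ balancingCoeffs v ↔ (∀ i, |l i| ≤ 1) ∧ ∑ i, l i • v i = 0 := by
  simp [balancingCoeffs, pi_norm_le_iff_of_nonneg, Fintype.linearCombination_apply]

theorem isCompact_balancingCoeffs (v : ι → F) : IsCompact (balancingCoeffs v) :=
  (isCompact_closedBall 0 1).inter_right (LinearMap.ker _).closed_of_finiteDimensional

theorem eventually_add_smul_mem_balancingCoeffs {v : ι → F} {l d : ι → ℝ}
    (hl : l ∈ balancingCoeffs v) (hd : ∑ i, d i • v i = 0) (hsupp : ∀ i, ¬ |l i| < 1 → d i = 0) :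
    ∀ᶠ t in 𝓝 (0 : ℝ), l + t • d ∈ balancingCoeffs v := by
  rw [mem_balancingCoeffs] at hl
  have hcoord : ∀ i, ∀ᶠ t in 𝓝 (0 : ℝ), |l i + t * d i| ≤ 1 := by
    intro i
    by_cases hi : |l i| < 1
    · have hcont : Continuous fun t : ℝ => |l i + t * d i| := by fun_prop
      exact (hcont.continuousAt.eventually_lt continuousAt_const (by simpa using hi)).mono
        fun _ h => h.le
    · exact Eventually.of_forall fun t => by simpa [hsupp i hi] using hl.1 i
  filter_upwards [eventually_all.2 hcoord] with t ht
  refine mem_balancingCoeffs.2 ⟨fun i => by simpa using ht i, ?_⟩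
  simp [add_smul, mul_smul, Finset.sum_add_distrib, ← Finset.smul_sum, hl.2, hd]

theorem linearIndepOn_of_mem_extremePoints_balancingCoeffs {v : ι → F} {l : ι → ℝ}
    (hl : l ∈ (balancingCoeffs v).extremePoints ℝ) :
    LinearIndepOn ℝ v ↑(Finset.univ.filter fun i => |l i| < 1) := by
  rw [linearIndepOn_finset_iff]
  intro g hg i hi
  set c : ι → ℝ := fun j => if |l j| < 1 then g j else 0
  have hc : ∑ j, c j • v j = 0 := by simpa [c, ite_smul, Finset.sum_filter] using hg
  have hsupp : ∀ j, ¬ |l j| < 1 → c j = 0 := fun j hj => if_neg hj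
  have hperturb := (eventually_add_smul_mem_balancingCoeffs hl.1 hc hsupp).and
    (eventually_add_smul_mem_balancingCoeffs hl.1 (d := -c) (by simp [hc]) (by simpa using hsupp))
  obtain ⟨t, ⟨hplus, hminus⟩, ht⟩ :=
    (hperturb.filter_mono nhdsWithin_le_nhds |>.and self_mem_nhdsWithin).exists
      (f := 𝓝[≠] (0 : ℝ))
  have hmid : l ∈ openSegment ℝ (l + t • c) (l + t • -c) :=
    ⟨1 / 2, 1 / 2, by norm_num, by norm_num, by norm_num, by module⟩
  have htc : t • c = 0 := by simpa using (mem_extremePoints.1 hl).2 _ hplus _ hminus hmid |>.1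
  have ht0 : t ≠ 0 := ht
  simpa [c, ht0, (Finset.mem_filter.1 hi).2] using congr_fun htc i

theorem exists_finset_norm_sum_sub_sum_compl_le [DecidableEq ι] [FiniteDimensional ℝ F]
    (v : ι → F) {δ : ℝ} (hδ : 0 ≤ δ) (hv : ∀ i, ‖v i‖ ≤ δ) :
    ∃ s : Finset ι, ‖∑ i ∈ s, v i - ∑ i ∈ sᶜ, v i‖ ≤ 2 * finrank ℝ F * δ := by
  obtain ⟨l, hl⟩ := (isCompact_balancingCoeffs v).extremePoints_nonempty
    ⟨0, mem_balancingCoeffs.2 ⟨by simp, by simp⟩⟩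
  obtain ⟨hl_le, hl0⟩ := mem_balancingCoeffs.1 hl.1
  set S := Finset.univ.filter fun i => |l i| < 1
  have hS : S.card ≤ finrank ℝ F := by
    simpa using (linearIndepOn_of_mem_extremePoints_balancingCoeffs hl).fintype_card_le_finrank
  -- coordinates with `|l i| = 1` are already signs, so rounding only moves those in `S`
  set e : ι → ℝ := fun i => if 0 ≤ l i then 1 else -1
  have he : ∀ i, |e i - l i| ≤ 2 := fun i => by
    have := abs_le.1 (hl_le i)
    simp only [e]
    split_ifs <;> rw [abs_le] <;> constructor <;> linarith
  have he_eq : ∀ i, ¬ |l i| < 1 → e i = l i := fun i hi => by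
    rcases (abs_eq zero_le_one).1 (le_antisymm (hl_le i) (not_lt.1 hi)) with h | h <;> simp [e, h]
  refine ⟨Finset.univ.filter fun i => 0 ≤ l i, ?_⟩
  calc _ = ‖∑ i, e i • v i‖ := by
        simp [e, ite_smul, Finset.sum_ite, Finset.compl_filter, sub_eq_add_neg]
    _ = ‖∑ i ∈ S, (e i - l i) • v i‖ := by
        rw [Finset.sum_filter_of_ne fun i _ h => by_contra fun hi => h (by simp [he_eq i hi])]
        simp [sub_smul, hl0]
    _ ≤ ∑ i ∈ S, 2 * δ := norm_sum_le_of_le S fun i _ => by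
        rw [norm_smul, Real.norm_eq_abs]
        exact mul_le_mul (he i) (hv i) (norm_nonneg _) zero_le_two
    _ = S.card * (2 * δ) := by rw [Finset.sum_const, nsmul_eq_mul]
    _ ≤ finrank ℝ F * (2 * δ) := by gcongr
    _ = 2 * finrank ℝ F * δ := by ring

end Balancing

section FinCons

variable {α : Type*} {n : ℕ}

theorem pairwise_disjoint_cons_compl_iUnion {Q : Fin n → Set α}
    (hQ : Pairwise (Disjoint on Q)) :
    Pairwise (Disjoint on (Fin.cons (⋃ i, Q i)ᶜ Q : Fin (n + 1) → Set α)) := by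
  have h0 : ∀ j, Disjoint (⋃ i, Q i)ᶜ (Q j) :=
    fun j => disjoint_compl_left_iff_subset.2 (subset_iUnion Q j)
  intro i j hij
  induction i using Fin.cases <;> induction j using Fin.cases
  · exact absurd rfl hij
  · exact h0 _
  · exact (h0 _).symm
  · exact hQ (by simpa [Fin.ext_iff] using hij)

theorem iUnion_cons_compl_iUnion (Q : Fin n → Set α) :
    ⋃ i, (Fin.cons (⋃ i, Q i)ᶜ Q : Fin (n + 1) → Set α) i = univ := by
  ext x
  simp only [mem_iUnion, Fin.exists_fin_succ, Fin.cons_zero, Fin.cons_succ, mem_compl_iff,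
    mem_univ, iff_true]
  tauto

end FinCons

section Atomless

variable {Ω : Type*} [MeasurableSpace Ω] {μ : Measure Ω}

theorem MeasureAtomless.restrict (hμ : MeasureAtomless μ) {S : Set Ω} (hS : MeasurableSet S) :
    MeasureAtomless (μ.restrict S) := by
  intro A hA h0
  rw [Measure.restrict_apply hA] at h0 ⊢
  obtain ⟨B, hBA, hB, hB0, hBlt⟩ := hμ (A ∩ S) (hA.inter hS) h0
  have hBS : B ∩ S = B := inter_eq_left.2 (hBA.trans inter_subset_right)
  exact ⟨B, hBA.trans inter_subset_left, hB, by rwa [Measure.restrict_apply hB, hBS],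
    by rwa [Measure.restrict_apply hB, hBS]⟩

theorem MeasureAtomless.exists_subset_measure_le_half (hμ : MeasureAtomless μ) {A : Set Ω}
    (hA : MeasurableSet A) (h0 : 0 < μ A) (hfin : μ A ≠ ∞) :
    ∃ B ⊆ A, MeasurableSet B ∧ 0 < μ B ∧ μ B ≤ μ A / 2 := by
  obtain ⟨C, hCA, hC, hC0, hClt⟩ := hμ A hA h0
  rcases le_or_gt (μ C) (μ A / 2) with hle | hgt
  · exact ⟨C, hCA, hC, hC0, hle⟩
  · have hdiff : μ (A \ C) = μ A - μ C := measure_sdiff hCA hC.nullMeasurableSet (by finiteness)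
    refine ⟨A \ C, sdiff_subset, hA.diff hC, by rw [hdiff]; exact tsub_pos_of_lt hClt, ?_⟩
    calc μ (A \ C) = μ A - μ C := hdiff
      _ ≤ μ A - μ A / 2 := tsub_le_tsub_left hgt.le _
      _ = μ A / 2 := ENNReal.sub_half hfin

theorem MeasureAtomless.exists_subset_measure_le (hμ : MeasureAtomless μ) {A : Set Ω}
    (hA : MeasurableSet A) (h0 : 0 < μ A) (hfin : μ A ≠ ∞) {δ : ℝ≥0∞} (hδ : δ ≠ 0) :
    ∃ B ⊆ A, MeasurableSet B ∧ 0 < μ B ∧ μ B ≤ δ := by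
  have halving : ∀ k : ℕ, ∃ B ⊆ A, MeasurableSet B ∧ 0 < μ B ∧ μ B ≤ 2⁻¹ ^ k * μ A := by
    intro k
    induction k with
    | zero => exact ⟨A, subset_rfl, hA, h0, by simp⟩
    | succ k ih =>
      obtain ⟨B, hBA, hB, hB0, hBle⟩ := ih
      obtain ⟨C, hCB, hC, hC0, hCle⟩ :=
        hμ.exists_subset_measure_le_half hB hB0 (ne_top_of_le_ne_top hfin (measure_mono hBA))
      refine ⟨C, hCB.trans hBA, hC, hC0, hCle.trans ?_⟩
      calc μ B / 2 ≤ 2⁻¹ ^ k * μ A / 2 := by gcongr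
        _ = 2⁻¹ ^ (k + 1) * μ A := by rw [pow_succ, ENNReal.div_eq_inv_mul]; ring
  have hlim : Tendsto (fun k : ℕ => (2⁻¹ : ℝ≥0∞) ^ k * μ A) atTop (𝓝 0) := by
    simpa using ENNReal.Tendsto.mul_const
      (ENNReal.tendsto_pow_atTop_nhds_zero_of_lt_one (by norm_num)) (Or.inr hfin)
  obtain ⟨k, hk⟩ := (hlim.eventually (eventually_le_nhds (pos_iff_ne_zero.2 hδ))).exists
  obtain ⟨B, hBA, hB, hB0, hBle⟩ := halving k
  exact ⟨B, hBA, hB, hB0, hBle.trans hk⟩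

theorem exists_subset_measure_le_and_forall_le_two_mul [IsFiniteMeasure μ] (R : Set Ω)
    (δ : ℝ≥0∞) : ∃ B ⊆ R, MeasurableSet B ∧ μ B ≤ δ ∧
      ∀ C ⊆ R, MeasurableSet C → μ C ≤ δ → μ C ≤ 2 * μ B := by
  set m := sSup (μ '' {C | C ⊆ R ∧ MeasurableSet C ∧ μ C ≤ δ})
  have le_m : ∀ C ⊆ R, MeasurableSet C → μ C ≤ δ → μ C ≤ m :=
    fun C hCR hC hCδ => le_sSup ⟨C, ⟨hCR, hC, hCδ⟩, rfl⟩
  rcases eq_or_ne m 0 with hm0 | hm0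
  · exact ⟨∅, empty_subset R, .empty, by simp, fun C hCR hC hCδ => by
      simpa [hm0] using le_m C hCR hC hCδ⟩
  have hm : m ≠ ∞ := ne_top_of_le_ne_top (measure_ne_top μ univ)
    (sSup_le (by rintro _ ⟨C, -, rfl⟩; exact measure_mono (subset_univ C)))
  obtain ⟨_, ⟨B, ⟨hBR, hB, hBδ⟩, rfl⟩, hlt⟩ := lt_sSup_iff.1 (ENNReal.half_lt_self hm0 hm)
  refine ⟨B, hBR, hB, hBδ, fun C hCR hC hCδ => (le_m C hCR hC hCδ).trans ?_⟩
  calc m = 2 * (m / 2) := (ENNReal.mul_div_cancel' (by norm_num) (by norm_num)).symm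
    _ ≤ 2 * μ B := by gcongr

theorem MeasureAtomless.exists_disjoint_measure_le_and_compl_iUnion_le [IsFiniteMeasure μ]
    (hμ : MeasureAtomless μ) {δ : ℝ≥0∞} (hδ : δ ≠ 0) :
    ∃ (n : ℕ) (Q : Fin n → Set Ω), (∀ i, MeasurableSet (Q i)) ∧ Pairwise (Disjoint on Q) ∧
      (∀ i, μ (Q i) ≤ δ) ∧ μ (⋃ i, Q i)ᶜ ≤ δ := by
  choose next next_sub next_meas next_le le_next using
    fun R => exists_subset_measure_le_and_forall_le_two_mul (μ := μ) R δ
  let R : ℕ → Set Ω := fun n => Nat.rec univ (fun _ S => S \ next S) n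
  let B : ℕ → Set Ω := fun n => next (R n)
  have R_succ : ∀ n, R (n + 1) = R n \ B n := fun n => rfl
  have R_eq : ∀ n, R n = (⋃ k : Fin n, B k)ᶜ := by
    intro n
    induction n with
    | zero => simp [R]
    | succ n ih =>
      rw [R_succ, ih]
      ext x
      simp [Fin.forall_fin_succ']
  have R_meas : ∀ n, MeasurableSet (R n) := fun n => by
    rw [R_eq]; exact (MeasurableSet.iUnion fun k => next_meas _).compl
  have R_anti : Antitone R :=
    antitone_nat_of_succ_le fun n => by rw [R_succ]; exact sdiff_subset
  have B_disj : Pairwise (Disjoint on B) := by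
    have h : ∀ k m, k < m → Disjoint (B k) (B m) := fun k m hkm =>
      disjoint_sdiff_right.mono_right ((next_sub _).trans (R_succ k ▸ R_anti hkm))
    intro k m hkm
    rcases hkm.lt_or_gt with hlt | hgt
    exacts [h k m hlt, (h m k hgt).symm]
  have B_lim : Tendsto (fun n => μ (B n)) atTop (𝓝 0) :=
    ENNReal.tendsto_atTop_zero_of_tsum_ne_top (by
      rw [← measure_iUnion B_disj fun n => next_meas _]; exact measure_ne_top _ _)
  obtain ⟨n, hn⟩ : ∃ n, μ (R n) ≤ δ := by
    by_contra! h
    have hlim := tendsto_measure_iInter_atTop (fun n => (R_meas n).nullMeasurableSet) R_anti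
      ⟨0, measure_ne_top μ _⟩
    have hpos : 0 < μ (⋂ n, R n) := (pos_iff_ne_zero.2 hδ).trans_le
      (ge_of_tendsto hlim (Eventually.of_forall fun n => (h n).le))
    obtain ⟨C, hC_sub, hC, hC0, hCδ⟩ :=
      hμ.exists_subset_measure_le (MeasurableSet.iInter R_meas) hpos (measure_ne_top μ _) hδ
    -- `C` remains a candidate at every step, so the greedy pieces cannot become small
    have hC_le : μ C ≤ 0 := ge_of_tendsto'
      (by simpa using ENNReal.Tendsto.const_mul B_lim (Or.inr (ENNReal.ofNat_ne_top (n := 2))))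
      fun n => le_next _ C (hC_sub.trans (iInter_subset _ n)) hC hCδ
    exact hC0.ne' (le_zero_iff.1 hC_le)
  exact ⟨n, fun k => B k, fun k => next_meas _, B_disj.comp_of_injective Fin.val_injective,
    fun k => next_le _, R_eq n ▸ hn⟩

theorem MeasureAtomless.exists_partition_measure_le [IsFiniteMeasure μ]
    (hμ : MeasureAtomless μ) {δ : ℝ≥0∞} (hδ : δ ≠ 0) :
    ∃ (n : ℕ) (P : Fin n → Set Ω), (∀ i, MeasurableSet (P i)) ∧ Pairwise (Disjoint on P) ∧
      ⋃ i, P i = univ ∧ ∀ i, μ (P i) ≤ δ := by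
  obtain ⟨n, Q, hQ, hQd, hQδ, hcompl⟩ := hμ.exists_disjoint_measure_le_and_compl_iUnion_le hδ
  refine ⟨n + 1, Fin.cons (⋃ i, Q i)ᶜ Q, fun i => ?_, pairwise_disjoint_cons_compl_iUnion hQd,
    iUnion_cons_compl_iUnion Q, fun i => ?_⟩
  · induction i using Fin.cases
    exacts [(MeasurableSet.iUnion hQ).compl, hQ _]
  · induction i using Fin.cases
    exacts [hcompl, hQδ _]

end Atomless

section Lp

variable {Ω X : Type*} [MeasurableSpace Ω] {μ : Measure Ω} {p : ℝ≥0∞} [NormedAddCommGroup X]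

theorem MeasureAtomless.exists_partition_eLpNorm_indicator_le (hμ : MeasureAtomless μ)
    (hp1 : 1 ≤ p) (hp : p ≠ ∞) {f : Ω → X} (hf : MemLp f p μ) {η : ℝ} (hη : 0 < η) :
    ∃ (n : ℕ) (P : Fin n → Set Ω), (∀ i, MeasurableSet (P i)) ∧ Pairwise (Disjoint on P) ∧
      ⋃ i, P i = univ ∧ ∀ i, eLpNorm ((P i).indicator f) p μ ≤ ENNReal.ofReal η := by
  obtain ⟨S, hS, hSμ, hSc⟩ :=
    hf.exists_eLpNorm_indicator_compl_lt hp (ENNReal.ofReal_pos.2 (half_pos hη)).ne'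
  obtain ⟨δ, hδ, hsmall⟩ := hf.eLpNorm_indicator_le hp1 hp (half_pos hη)
  have : IsFiniteMeasure (μ.restrict S) := isFiniteMeasure_restrict.2 hSμ.ne
  obtain ⟨n, P, hP, hPd, hPu, hPμ⟩ :=
    (hμ.restrict hS).exists_partition_measure_le (ENNReal.ofReal_pos.2 hδ).ne'
  refine ⟨n, P, hP, hPd, hPu, fun i => ?_⟩
  calc eLpNorm ((P i).indicator f) p μ
      = eLpNorm ((P i ∩ S).indicator f + (P i).indicator (Sᶜ.indicator f)) p μ := by
        rw [← indicator_indicator, ← indicator_add', indicator_self_add_compl]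
    _ ≤ eLpNorm ((P i ∩ S).indicator f) p μ + eLpNorm ((P i).indicator (Sᶜ.indicator f)) p μ :=
        eLpNorm_add_le (hf.1.indicator ((hP i).inter hS))
          ((hf.1.indicator hS.compl).indicator (hP i)) hp1
    _ ≤ ENNReal.ofReal (η / 2) + ENNReal.ofReal (η / 2) := by
        gcongr
        · exact hsmall _ ((hP i).inter hS) ((Measure.restrict_apply (hP i)).symm.trans_le (hPμ i))
        · exact (eLpNorm_indicator_le _).trans hSc.le
    _ = ENNReal.ofReal η := by rw [← ENNReal.ofReal_add (by positivity) (by positivity), add_halves]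

theorem coeFn_restrictLp (f : Lp X p μ) {A : Set Ω} (hA : MeasurableSet A) :
    restrictLp f hA =ᵐ[μ] A.indicator f :=
  MemLp.coeFn_toLp _

theorem norm_restrictLp (f : Lp X p μ) {A : Set Ω} (hA : MeasurableSet A) :
    ‖restrictLp f hA‖ = (eLpNorm (A.indicator f) p μ).toReal :=
  Lp.norm_toLp _ _

theorem restrictLp_congr (f : Lp X p μ) {A B : Set Ω} (hAB : A = B) (hA : MeasurableSet A)
    (hB : MeasurableSet B) : restrictLp f hA = restrictLp f hB := by
  subst hAB; rfl

theorem restrictLp_biUnion {ι : Type*} {P : ι → Set Ω}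
    (hP : ∀ i, MeasurableSet (P i)) (hPd : Pairwise (Disjoint on P)) (s : Finset ι)
    (f : Lp X p μ) :
    restrictLp f (s.measurableSet_biUnion fun i _ => hP i) = ∑ i ∈ s, restrictLp f (hP i) := by
  apply Lp.ext
  filter_upwards [coeFn_restrictLp f (s.measurableSet_biUnion fun i _ => hP i),
    Lp.coeFn_fun_finsetSum s fun i => restrictLp f (hP i),
    (eventually_all_finset s).2 fun i _ => coeFn_restrictLp f (hP i)] with x h h_sum h_pieces
  rw [h, h_sum, Finset.indicator_biUnion_apply s P (hPd.set_pairwise _)]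
  exact Finset.sum_congr rfl fun i hi => (h_pieces i hi).symm

end Lp

theorem narrow_of_continuous_Lp_to_finiteDimensional_general
    {Ω X F : Type*} [MeasurableSpace Ω] (μ : Measure Ω)
    [NormedAddCommGroup X] [NormedSpace ℝ X]
    [NormedAddCommGroup F] [NormedSpace ℝ F] [FiniteDimensional ℝ F]
    {p : ℝ≥0∞} [Fact (1 ≤ p)] (hp : p ≠ ∞)
    (hatomless : MeasureAtomless μ)
    (T : Lp X p μ →L[ℝ] F) :
    ∀ f : Lp X p μ, ∀ ε : ℝ, 0 < ε →
      ∃ (A : Set Ω) (hA : MeasurableSet A),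
        ‖T (restrictLp f hA) - T (restrictLp f hA.compl)‖ < ε := by
  intro f ε hε
  set C := 2 * (finrank ℝ F : ℝ) * ‖T‖
  set η := ε / (C + 1)
  obtain ⟨n, P, hP, hPd, hPu, hPf⟩ :=
    hatomless.exists_partition_eLpNorm_indicator_le Fact.out hp (Lp.memLp f) (η := η)
      (by positivity)
  have hpiece : ∀ i, ‖restrictLp f (hP i)‖ ≤ η := fun i => by
    rw [norm_restrictLp]; exact ENNReal.toReal_le_of_le_ofReal (by positivity) (hPf i)
  obtain ⟨s, hs⟩ := exists_finset_norm_sum_sub_sum_compl_le (fun i => T (restrictLp f (hP i)))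
    (by positivity) fun i => T.le_opNorm_of_le (hpiece i)
  have hA := s.measurableSet_biUnion fun i _ => hP i
  refine ⟨⋃ i ∈ s, P i, hA, ?_⟩
  have hAc : (⋃ i ∈ s, P i)ᶜ = ⋃ i ∈ sᶜ, P i := by
    simpa using biUnion_compl_eq_of_pairwise_disjoint_of_iUnion_eq_univ hPu hPd s
  rw [restrictLp_biUnion hP hPd s f,
    restrictLp_congr f hAc hA.compl (sᶜ.measurableSet_biUnion fun i _ => hP i),
    restrictLp_biUnion hP hPd, map_sum, map_sum]
  calc _ ≤ C * η := by simpa [C, mul_assoc] using hs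
    _ < ε := by
      rw [mul_div_assoc', div_lt_iff₀ (by positivity)]
      nlinarith

/-- Every norm-continuous linear operator from the Bochner space `Lp(μ, X)` over a
σ-finite atomless measure to a finite dimensional normed space `F` is narrow:
every `f` admits, for every `ε > 0`, a measurable set `A` with
`‖T (1_A f) - T (1_{Ω∖A} f)‖ < ε`. -/
theorem narrow_of_continuous_Lp_to_finiteDimensional
    {Ω X F : Type*} [MeasurableSpace Ω] (μ : Measure Ω) [SigmaFinite μ]
    [NormedAddCommGroup X] [NormedSpace ℝ X] [CompleteSpace X]
    [NormedAddCommGroup F] [NormedSpace ℝ F] [FiniteDimensional ℝ F]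
    {p : ℝ≥0∞} [Fact (1 ≤ p)] (hp : p ≠ ∞)
    (hatomless : MeasureAtomless μ)
    (T : Lp X p μ →L[ℝ] F) :
    ∀ f : Lp X p μ, ∀ ε : ℝ, 0 < ε →
      ∃ (A : Set Ω) (hA : MeasurableSet A),
        ‖T (restrictLp f hA) - T (restrictLp f hA.compl)‖ < ε :=
  narrow_of_continuous_Lp_to_finiteDimensional_general μ hp hatomless T
end

section
/- Let E be a vector lattice, u ∈ E, and let e₁, …, eₙ ∈ E be pairwise disjoint positive elements with |u| = e₁ + … + eₙ. Then there exist pairwise disjoint u₁, …, uₙ ∈ E with u = u₁ + … + uₙ and |uᵢ| = eᵢ for every i = 1, …, n. -/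
/-!
Take `uᵢ = (u⁺ ⊓ eᵢ) - (u⁻ ⊓ eᵢ)`. In a lattice-ordered group `x + y = x ⊔ y` whenever
`x ⊓ y = 0`, so by distributivity a meet with a positive element splits over a sum of pairwise
disjoint positive elements. Hence `∑ (u^± ⊓ eᵢ) = u^± ⊓ |u| = u^±`, which sums the `uᵢ` to `u`,
and `(u⁺ ⊓ eᵢ) + (u⁻ ⊓ eᵢ) = eᵢ ⊓ (u⁺ + u⁻) = eᵢ`; this sum is `|uᵢ|`, because the modulus of
a difference of disjoint elements is their sum.
-/

theorem inf_eq_zero_of_le_of_le {α : Type*} [Lattice α] [Zero α] {a b a' b' : α} (ha : 0 ≤ a)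
    (hb : 0 ≤ b) (haa' : a ≤ a') (hbb' : b ≤ b') (h : a' ⊓ b' = 0) : a ⊓ b = 0 :=
  le_antisymm (h ▸ inf_le_inf haa' hbb') (le_inf ha hb)

section LatticeOrderedAddCommGroup

variable {E : Type*} [Lattice E] [AddCommGroup E] [AddLeftMono E]

theorem add_eq_sup_of_inf_eq_zero {a b : E} (h : a ⊓ b = 0) : a + b = a ⊔ b := by
  rw [← inf_add_sup, h, zero_add]

theorem abs_sub_eq_add_of_inf_eq_zero {a b : E} (h : a ⊓ b = 0) : |a - b| = a + b := by
  rw [abs_sub_comm, ← sup_sub_inf_eq_abs_sub, h, sub_zero, add_eq_sup_of_inf_eq_zero h]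

theorem inf_add_eq_add_inf_of_inf_eq_zero {a b c : E} (ha : 0 ≤ a) (hbc : b ⊓ c = 0) :
    a ⊓ (b + c) = a ⊓ b + a ⊓ c := by
  let := AddCommGroup.toDistribLattice E
  have hb : 0 ≤ b := hbc ▸ inf_le_left
  have hc : 0 ≤ c := hbc ▸ inf_le_right
  have hdisj : a ⊓ b ⊓ (a ⊓ c) = 0 :=
    inf_eq_zero_of_le_of_le (le_inf ha hb) (le_inf ha hc) inf_le_right inf_le_right hbc
  rw [add_eq_sup_of_inf_eq_zero hbc, inf_sup_left, add_eq_sup_of_inf_eq_zero hdisj]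

theorem inf_sum_eq_sum_inf_of_pairwise {ι : Type*} {s : Finset ι} {f : ι → E}
    (hf : ∀ i ∈ s, 0 ≤ f i) (hdisj : (s : Set ι).Pairwise fun i j => f i ⊓ f j = 0)
    {a : E} (ha : 0 ≤ a) : a ⊓ ∑ i ∈ s, f i = ∑ i ∈ s, a ⊓ f i := by
  classical
  induction s using Finset.induction_on generalizing a with
  | empty => simpa using ha
  | insert j s hj ih =>
    have hf' : ∀ i ∈ s, 0 ≤ f i := fun i hi => hf i (Finset.mem_insert_of_mem hi)
    have hdisj' : (s : Set ι).Pairwise fun i j => f i ⊓ f j = 0 :=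
      hdisj.mono (by simp)
    have hj_disj : f j ⊓ ∑ i ∈ s, f i = 0 := by
      rw [ih hf' hdisj' (hf j (Finset.mem_insert_self j s))]
      refine Finset.sum_eq_zero fun i hi => hdisj (by simp) (by simp [hi]) ?_
      rintro rfl
      exact hj hi
    rw [Finset.sum_insert hj, Finset.sum_insert hj, inf_add_eq_add_inf_of_inf_eq_zero ha hj_disj,
      ih hf' hdisj' ha]

theorem abs_posPart_inf_sub_negPart_inf {u x : E} (hx : 0 ≤ x) (hxu : x ≤ |u|) :
    |u⁺ ⊓ x - u⁻ ⊓ x| = x := by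
  have hdisj : u⁺ ⊓ x ⊓ (u⁻ ⊓ x) = 0 :=
    inf_eq_zero_of_le_of_le (le_inf (posPart_nonneg u) hx) (le_inf (negPart_nonneg u) hx)
      inf_le_left inf_le_left (posPart_inf_negPart_eq_zero u)
  rw [abs_sub_eq_add_of_inf_eq_zero hdisj, inf_comm, inf_comm u⁻,
    ← inf_add_eq_add_inf_of_inf_eq_zero hx (posPart_inf_negPart_eq_zero u), posPart_add_negPart,
    inf_eq_left.2 hxu]

end LatticeOrderedAddCommGroup

theorem exists_disjoint_decomposition_of_abs_eq_sum_general
    {E : Type*} [Lattice E] [AddCommGroup E]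
    [CovariantClass E E (· + ·) (· ≤ ·)]
    (u : E) {n : ℕ} (e : Fin n → E)
    (hpos : ∀ i : Fin n, 0 ≤ e i)
    (hdisj : ∀ i j : Fin n, i ≠ j → e i ⊓ e j = 0)
    (hsum : |u| = ∑ i, e i) :
    ∃ w : Fin n → E,
      (∀ i j : Fin n, i ≠ j → |w i| ⊓ |w j| = 0) ∧
      u = ∑ i, w i ∧ ∀ i : Fin n, |w i| = e i := by
  have inf_abs : ∀ x : E, 0 ≤ x → x ⊓ |u| = ∑ i, x ⊓ e i := fun x hx =>
    hsum ▸ inf_sum_eq_sum_inf_of_pairwise (fun i _ => hpos i) (fun i _ j _ => hdisj i j) hx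
  have le_abs : ∀ i, e i ≤ |u| := fun i =>
    hsum ▸ Finset.single_le_sum (fun j _ => hpos j) (Finset.mem_univ i)
  have abs_piece : ∀ i, |u⁺ ⊓ e i - u⁻ ⊓ e i| = e i := fun i =>
    abs_posPart_inf_sub_negPart_inf (hpos i) (le_abs i)
  refine ⟨fun i => u⁺ ⊓ e i - u⁻ ⊓ e i, fun i j hij => ?_, ?_, abs_piece⟩
  · rw [abs_piece, abs_piece]
    exact hdisj i j hij
  · rw [Finset.sum_sub_distrib, ← inf_abs _ (posPart_nonneg u), ← inf_abs _ (negPart_nonneg u),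
      ← posPart_add_negPart u, inf_eq_left.2 (le_add_of_nonneg_right (negPart_nonneg u)),
      inf_eq_left.2 (le_add_of_nonneg_left (posPart_nonneg u)), posPart_sub_negPart]

/-- Decomposability of the modulus in a vector lattice: if `|u| = e₁ + ⋯ + eₙ`
with `e₁, …, eₙ` pairwise disjoint positive elements, then `u = u₁ + ⋯ + uₙ` for
some pairwise disjoint `u₁, …, uₙ` with `|uᵢ| = eᵢ` for every `i`. -/
theorem exists_disjoint_decomposition_of_abs_eq_sum
    {E : Type*} [Lattice E] [AddCommGroup E] [Module ℝ E]
    [CovariantClass E E (· + ·) (· ≤ ·)] [PosSMulMono ℝ E]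
    (u : E) {n : ℕ} (e : Fin n → E)
    (hpos : ∀ i : Fin n, 0 ≤ e i)
    (hdisj : ∀ i j : Fin n, i ≠ j → e i ⊓ e j = 0)
    (hsum : |u| = ∑ i, e i) :
    ∃ w : Fin n → E,
      (∀ i j : Fin n, i ≠ j → |w i| ⊓ |w j| = 0) ∧
      u = ∑ i, w i ∧ ∀ i : Fin n, |w i| = e i :=
  exists_disjoint_decomposition_of_abs_eq_sum_general u e hpos hdisj hsum
end
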